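/- arXiv:2301.02957 — 4 statements merged into one kernel-verified Lean document; each statement's English description precedes it below -/
import Mathlib

section
/- The functions u(x,y,t) = -(η_x/(f̄ F²)) sin(f̄ t), v(x,y,t) = (η_x/(f̄ F²))(1 - cos(f̄ t)), h(x,y,t) = (η_x²/(f̄² F²))(1 - cos(f̄ t)) + η_x x satisfy the rotating shallow water equations with flat bottom topography and initial conditions u(x,y,0) = v(x,y,0) = 0, h(x,y,0) = η_x x. -/
/-!
The velocity is uniform in space and the free surface is a plane of constant slope `ηx`, so the
advection terms vanish, the pressure-gradient force is the constant `-ηx / F²`, and the equations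
reduce to the linear ODEs `U' = -ηx / F² + f̄ V`, `V' = -f̄ U`, `H' = -ηx U` for the velocity
`(U, V)` and the mean height `H`. Their solution starting from rest is the inertial oscillation
of `(U, V)` about the geostrophic velocity `(0, ηx / (f̄ F²))`.
-/

open Real

def IsRotatingShallowWaterSolution (fbar F : ℝ) (u v h : ℝ → ℝ → ℝ → ℝ) : Prop :=
  (∀ x y t, deriv (fun s => u x y s) t =
      -(u x y t) * deriv (fun a => u a y t) x - v x y t * deriv (fun b => u x b t) y
        - (1 / F ^ 2) * deriv (fun a => h a y t) x + fbar * v x y t) ∧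
    (∀ x y t, deriv (fun s => v x y s) t =
      -(u x y t) * deriv (fun a => v a y t) x - v x y t * deriv (fun b => v x b t) y
        - (1 / F ^ 2) * deriv (fun b => h x b t) y - fbar * u x y t) ∧
    (∀ x y t, deriv (fun s => h x y s) t =
      -(deriv (fun a => u a y t * h a y t) x) - deriv (fun b => v x b t * h x b t) y)

theorem isRotatingShallowWaterSolution_uniform_iff (fbar F ηx : ℝ) (U V H : ℝ → ℝ) :
    IsRotatingShallowWaterSolution fbar F (fun _ _ t => U t) (fun _ _ t => V t)
        (fun x _ t => H t + ηx * x) ↔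
      ∀ t, deriv U t = -(ηx / F ^ 2) + fbar * V t ∧ deriv V t = -(fbar * U t) ∧
        deriv H t = -(U t * ηx) := by
  simp [IsRotatingShallowWaterSolution, forall_and, div_eq_inv_mul]

theorem hasDerivAt_sin_mul (f t : ℝ) :
    HasDerivAt (fun s => sin (f * s)) (f * cos (f * t)) t := by
  simpa [mul_comm] using ((hasDerivAt_id t).const_mul f).sin

theorem hasDerivAt_one_sub_cos_mul (f t : ℝ) :
    HasDerivAt (fun s => 1 - cos (f * s)) (f * sin (f * t)) t := by
  simpa [mul_comm] using (((hasDerivAt_id t).const_mul f).cos).const_sub 1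

theorem inertialOscillation_ode {fbar : ℝ} (hf : fbar ≠ 0) (F ηx t : ℝ) :
    deriv (fun s => -(ηx / (fbar * F ^ 2)) * sin (fbar * s)) t =
        -(ηx / F ^ 2) + fbar * ((ηx / (fbar * F ^ 2)) * (1 - cos (fbar * t))) ∧
      deriv (fun s => (ηx / (fbar * F ^ 2)) * (1 - cos (fbar * s))) t =
        -(fbar * (-(ηx / (fbar * F ^ 2)) * sin (fbar * t))) ∧
      deriv (fun s => (ηx ^ 2 / (fbar ^ 2 * F ^ 2)) * (1 - cos (fbar * s))) t =
        -(-(ηx / (fbar * F ^ 2)) * sin (fbar * t) * ηx) := by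
  refine ⟨?_, ?_, ?_⟩
  · rw [((hasDerivAt_sin_mul fbar t).const_mul _).deriv]
    field_simp
    ring
  · rw [((hasDerivAt_one_sub_cos_mul fbar t).const_mul _).deriv]
    ring
  · rw [((hasDerivAt_one_sub_cos_mul fbar t).const_mul _).deriv]
    field_simp

theorem stmt_1_general (fbar F ηx : ℝ) (hf : fbar ≠ 0)
    (u v h : ℝ → ℝ → ℝ → ℝ)
    (hu : ∀ x y t, u x y t = -(ηx / (fbar * F ^ 2)) * Real.sin (fbar * t))
    (hv : ∀ x y t, v x y t = (ηx / (fbar * F ^ 2)) * (1 - Real.cos (fbar * t)))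
    (hh : ∀ x y t, h x y t =
      (ηx ^ 2 / (fbar ^ 2 * F ^ 2)) * (1 - Real.cos (fbar * t)) + ηx * x) :
    (∀ x y t, deriv (fun s => u x y s) t =
      -(u x y t) * deriv (fun a => u a y t) x - v x y t * deriv (fun b => u x b t) y
        - (1 / F ^ 2) * deriv (fun a => h a y t) x + fbar * v x y t) ∧
    (∀ x y t, deriv (fun s => v x y s) t =
      -(u x y t) * deriv (fun a => v a y t) x - v x y t * deriv (fun b => v x b t) y
        - (1 / F ^ 2) * deriv (fun b => h x b t) y - fbar * u x y t) ∧
    (∀ x y t, deriv (fun s => h x y s) t =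
      -(deriv (fun a => u a y t * h a y t) x) - deriv (fun b => v x b t * h x b t) y) ∧
    (∀ x y, u x y 0 = 0 ∧ v x y 0 = 0 ∧ h x y 0 = ηx * x) := by
  obtain rfl : u = fun _ _ t => -(ηx / (fbar * F ^ 2)) * sin (fbar * t) := by
    funext x y t; exact hu x y t
  obtain rfl : v = fun _ _ t => (ηx / (fbar * F ^ 2)) * (1 - cos (fbar * t)) := by
    funext x y t; exact hv x y t
  obtain rfl :
      h = fun x _ t => (ηx ^ 2 / (fbar ^ 2 * F ^ 2)) * (1 - cos (fbar * t)) + ηx * x := by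
    funext x y t; exact hh x y t
  obtain ⟨momentum_x, momentum_y, mass⟩ :=
    (isRotatingShallowWaterSolution_uniform_iff fbar F ηx _ _ _).mpr
      (inertialOscillation_ode hf F ηx)
  exact ⟨momentum_x, momentum_y, mass, fun x y => by simp⟩

/-- Corollary 3.4(i): one-sided inertial oscillation solution satisfies the rotating
shallow water equations with flat bottom and the stated initial conditions. -/
theorem stmt_1 (fbar F ηx : ℝ) (hf : fbar ≠ 0) (hF : F ≠ 0)
    (u v h : ℝ → ℝ → ℝ → ℝ)
    (hu : ∀ x y t, u x y t = -(ηx / (fbar * F ^ 2)) * Real.sin (fbar * t))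
    (hv : ∀ x y t, v x y t = (ηx / (fbar * F ^ 2)) * (1 - Real.cos (fbar * t)))
    (hh : ∀ x y t, h x y t =
      (ηx ^ 2 / (fbar ^ 2 * F ^ 2)) * (1 - Real.cos (fbar * t)) + ηx * x) :
    (∀ x y t, deriv (fun s => u x y s) t =
      -(u x y t) * deriv (fun a => u a y t) x - v x y t * deriv (fun b => u x b t) y
        - (1 / F ^ 2) * deriv (fun a => h a y t) x + fbar * v x y t) ∧
    (∀ x y t, deriv (fun s => v x y s) t =
      -(u x y t) * deriv (fun a => v a y t) x - v x y t * deriv (fun b => v x b t) y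
        - (1 / F ^ 2) * deriv (fun b => h x b t) y - fbar * u x y t) ∧
    (∀ x y t, deriv (fun s => h x y s) t =
      -(deriv (fun a => u a y t * h a y t) x) - deriv (fun b => v x b t * h x b t) y) ∧
    (∀ x y, u x y 0 = 0 ∧ v x y 0 = 0 ∧ h x y 0 = ηx * x) :=
  stmt_1_general fbar F ηx hf u v h hu hv hh
end

section
/- For t ∈ [0, π/(2f̄)), the functions u(x,y,t) = -f̄ x tan(f̄ t), v(x,y,t) = -f̄ x, h(x,y,t) = h₀ sec(f̄ t) satisfy the rotating shallow water equations over a flat bottom with constant Coriolis parameter f̄ > 0, with initial conditions u(x,y,0) = 0, v(x,y,0) = -f̄ x, h(x,y,0) = h₀. -/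
/-! The depth `h` is uniform in space, so the pressure gradient vanishes and the momentum
equations reduce to the identity `1 + tan² = sec²`, while continuity reduces to
`sec' = tan · sec`. The solution lives as long as `cos (f̄ t) > 0`. -/

open Real

lemma cos_mul_pos_of_mem_Ico {f t : ℝ} (hf : 0 < f) (ht : t ∈ Set.Ico 0 (π / (2 * f))) :
    0 < cos (f * t) := by
  refine cos_pos_of_mem_Ioo ⟨by nlinarith [pi_pos, ht.1], ?_⟩
  calc f * t < f * (π / (2 * f)) := mul_lt_mul_of_pos_left ht.2 hf
    _ = π / 2 := by field_simp

lemma hasDerivAt_tan_mul {f t : ℝ} (hc : cos (f * t) ≠ 0) :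
    HasDerivAt (fun s => tan (f * s)) (f / cos (f * t) ^ 2) t :=
  ((hasDerivAt_tan hc).comp t ((hasDerivAt_id t).const_mul f)).congr_deriv (by ring)

lemma hasDerivAt_one_div_cos_mul {f t : ℝ} (hc : cos (f * t) ≠ 0) :
    HasDerivAt (fun s => 1 / cos (f * s)) (f * sin (f * t) / cos (f * t) ^ 2) t := by
  simp_rw [one_div]
  exact (((hasDerivAt_cos (f * t)).comp t ((hasDerivAt_id t).const_mul f)).inv hc).congr_deriv
    (by simp only [mul_one, neg_mul, neg_neg, Function.comp_apply]; ring)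

section

variable {f F h₀ : ℝ} {u v h : ℝ → ℝ → ℝ → ℝ}

lemma u_momentum (hu : ∀ x y t, u x y t = -(f * x) * tan (f * t))
    (hv : ∀ x y t, v x y t = -(f * x)) (hh : ∀ x y t, h x y t = h₀ * (1 / cos (f * t)))
    {x y t : ℝ} (hc : cos (f * t) ≠ 0) :
    deriv (fun s => u x y s) t =
      -(u x y t) * deriv (fun a => u a y t) x - v x y t * deriv (fun b => u x b t) y
        - (1 / F ^ 2) * deriv (fun a => h a y t) x + f * v x y t := by
  simp only [hu, hv, hh, (hasDerivAt_tan_mul hc).deriv, deriv_const_mul_field',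
    deriv_mul_const_field', deriv.fun_neg', deriv_const_mul_id', deriv_const', mul_zero, sub_zero]
  rw [← inv_one_add_tan_sq hc]
  field_simp
  ring

lemma v_momentum (hu : ∀ x y t, u x y t = -(f * x) * tan (f * t))
    (hv : ∀ x y t, v x y t = -(f * x)) (hh : ∀ x y t, h x y t = h₀ * (1 / cos (f * t)))
    (x y t : ℝ) :
    deriv (fun s => v x y s) t =
      -(u x y t) * deriv (fun a => v a y t) x - v x y t * deriv (fun b => v x b t) y
        - (1 / F ^ 2) * deriv (fun b => h x b t) y - f * u x y t := by
  simp only [hu, hv, hh, deriv_const', deriv.fun_neg', deriv_const_mul_id', mul_zero, sub_zero]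
  ring

lemma mass_conservation (hu : ∀ x y t, u x y t = -(f * x) * tan (f * t))
    (hv : ∀ x y t, v x y t = -(f * x)) (hh : ∀ x y t, h x y t = h₀ * (1 / cos (f * t)))
    {x y t : ℝ} (hc : cos (f * t) ≠ 0) :
    deriv (fun s => h x y s) t =
      -(deriv (fun a => u a y t * h a y t) x) - deriv (fun b => v x b t * h x b t) y := by
  simp only [hu, hv, hh, (hasDerivAt_one_div_cos_mul hc).deriv, deriv_const_mul_field',
    deriv_mul_const_field', deriv.fun_neg', deriv_const_mul_id', deriv_const']
  rw [tan_eq_sin_div_cos]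
  field_simp
  ring

end

theorem stmt_3_general (fbar F h₀ : ℝ) (hf : 0 < fbar)
    (u v h : ℝ → ℝ → ℝ → ℝ)
    (hu : ∀ x y t, u x y t = -(fbar * x) * Real.tan (fbar * t))
    (hv : ∀ x y t, v x y t = -(fbar * x))
    (hh : ∀ x y t, h x y t = h₀ * (1 / Real.cos (fbar * t))) :
    (∀ x y, ∀ t ∈ Set.Ico (0 : ℝ) (Real.pi / (2 * fbar)),
      deriv (fun s => u x y s) t =
        -(u x y t) * deriv (fun a => u a y t) x - v x y t * deriv (fun b => u x b t) y
          - (1 / F ^ 2) * deriv (fun a => h a y t) x + fbar * v x y t) ∧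
    (∀ x y, ∀ t ∈ Set.Ico (0 : ℝ) (Real.pi / (2 * fbar)),
      deriv (fun s => v x y s) t =
        -(u x y t) * deriv (fun a => v a y t) x - v x y t * deriv (fun b => v x b t) y
          - (1 / F ^ 2) * deriv (fun b => h x b t) y - fbar * u x y t) ∧
    (∀ x y, ∀ t ∈ Set.Ico (0 : ℝ) (Real.pi / (2 * fbar)),
      deriv (fun s => h x y s) t =
        -(deriv (fun a => u a y t * h a y t) x) - deriv (fun b => v x b t * h x b t) y) ∧
    (∀ x y, u x y 0 = 0 ∧ v x y 0 = -(fbar * x) ∧ h x y 0 = h₀) := by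
  refine ⟨fun x y t ht => u_momentum hu hv hh (cos_mul_pos_of_mem_Ico hf ht).ne',
    fun x y t _ => v_momentum hu hv hh x y t,
    fun x y t ht => mass_conservation hu hv hh (cos_mul_pos_of_mem_Ico hf ht).ne',
    fun x y => ⟨by simp [hu], hv x y 0, by simp [hh]⟩⟩

/-- Theorem 3.10(i): anticyclonic vortex with finite escape time, Condition VI. -/
theorem stmt_3 (fbar F h₀ : ℝ) (hf : 0 < fbar) (hF : F ≠ 0)
    (u v h : ℝ → ℝ → ℝ → ℝ)
    (hu : ∀ x y t, u x y t = -(fbar * x) * Real.tan (fbar * t))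
    (hv : ∀ x y t, v x y t = -(fbar * x))
    (hh : ∀ x y t, h x y t = h₀ * (1 / Real.cos (fbar * t))) :
    (∀ x y, ∀ t ∈ Set.Ico (0 : ℝ) (Real.pi / (2 * fbar)),
      deriv (fun s => u x y s) t =
        -(u x y t) * deriv (fun a => u a y t) x - v x y t * deriv (fun b => u x b t) y
          - (1 / F ^ 2) * deriv (fun a => h a y t) x + fbar * v x y t) ∧
    (∀ x y, ∀ t ∈ Set.Ico (0 : ℝ) (Real.pi / (2 * fbar)),
      deriv (fun s => v x y s) t =
        -(u x y t) * deriv (fun a => v a y t) x - v x y t * deriv (fun b => v x b t) y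
          - (1 / F ^ 2) * deriv (fun b => h x b t) y - fbar * u x y t) ∧
    (∀ x y, ∀ t ∈ Set.Ico (0 : ℝ) (Real.pi / (2 * fbar)),
      deriv (fun s => h x y s) t =
        -(deriv (fun a => u a y t * h a y t) x) - deriv (fun b => v x b t * h x b t) y) ∧
    (∀ x y, u x y 0 = 0 ∧ v x y 0 = -(fbar * x) ∧ h x y 0 = h₀) :=
  stmt_3_general fbar F h₀ hf u v h hu hv hh
end

section
/- If time-dependent coefficients ũ₀, ũ_x, ũ_y, h̃₀ : ℝ → ℝ satisfy the ODE system dũ₀/dt = -ũ₀ ũ_x, dũ_x/dt = -ũ_x² + f̄ ũ_y - f̄², dũ_y/dt = -ũ_y ũ_x, dh̃₀/dt = -h̃₀ ũ_x, then u(x,y,t) = ũ₀(t) + ũ_x(t) x + ũ_y(t) y, v(x,y,t) = -f̄ x, h(x,y,t) = h̃₀(t) satisfy the rotating shallow water equations over a flat bottom (D = 0). -/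
open Real

/-! Every field of the ansatz is affine in `(x, y)`, so its spatial derivatives are its
coefficients and each shallow water equation becomes an identity between affine functions
of `(x, y)`. Matching the coefficients of `1`, `x`, `y` in the `x`-momentum equation gives the
ODEs for `ũ₀`, `ũ_x`, `ũ_y`; with `v = -f̄ x` the advection and Coriolis terms of the
`y`-momentum equation cancel; and since `h` is uniform in space, continuity reduces to the ODE
for `h̃₀`. -/

theorem deriv_add_mul_add_mul {a b c : ℝ → ℝ} {t : ℝ} (ha : DifferentiableAt ℝ a t)
    (hb : DifferentiableAt ℝ b t) (hc : DifferentiableAt ℝ c t) (x y : ℝ) :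
    deriv (fun s => a s + b s * x + c s * y) t = deriv a t + deriv b t * x + deriv c t * y := by
  simp [ha, hb, hc]

theorem stmt_8_general (fbar F : ℝ)
    (u₀ ux uy h₀ : ℝ → ℝ)
    (hu₀ : Differentiable ℝ u₀) (hux : Differentiable ℝ ux)
    (huy : Differentiable ℝ uy)
    (ode1 : ∀ t, deriv u₀ t = -(u₀ t) * ux t)
    (ode2 : ∀ t, deriv ux t = -(ux t) ^ 2 + fbar * uy t - fbar ^ 2)
    (ode3 : ∀ t, deriv uy t = -(uy t) * ux t)
    (ode4 : ∀ t, deriv h₀ t = -(h₀ t) * ux t)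
    (u v h : ℝ → ℝ → ℝ → ℝ)
    (hu : ∀ x y t, u x y t = u₀ t + ux t * x + uy t * y)
    (hv : ∀ x y t, v x y t = -(fbar * x))
    (hh : ∀ x y t, h x y t = h₀ t) :
    (∀ x y t, deriv (fun s => u x y s) t =
      -(u x y t) * deriv (fun a => u a y t) x - v x y t * deriv (fun b => u x b t) y
        - (1 / F ^ 2) * deriv (fun a => h a y t) x + fbar * v x y t) ∧
    (∀ x y t, deriv (fun s => v x y s) t =
      -(u x y t) * deriv (fun a => v a y t) x - v x y t * deriv (fun b => v x b t) y
        - (1 / F ^ 2) * deriv (fun b => h x b t) y - fbar * u x y t) ∧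
    (∀ x y t, deriv (fun s => h x y s) t =
      -(deriv (fun a => u a y t * h a y t) x) - deriv (fun b => v x b t * h x b t) y) := by
  simp only [hu, hv, hh]
  refine ⟨fun x y t => ?_, fun x y t => ?_, fun x y t => ?_⟩
  · rw [deriv_add_mul_add_mul (hu₀ t) (hux t) (huy t), ode1, ode2, ode3]
    simp only [deriv_add_const', deriv_const_add', deriv_const_mul_id', deriv_const']
    ring
  · simp only [deriv_const', deriv.fun_neg', deriv_const_mul_id']
    ring
  · simp only [deriv_mul_const_field', deriv_add_const', deriv_const_add', deriv_const_mul_id',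
      deriv_const', ode4]
    ring

/-- Theorem 3.8 (reduced system for Conditions VI/VII): solutions of the reduced ODE
system give solutions of the rotating shallow water equations over a flat bottom. -/
theorem stmt_8 (fbar F : ℝ) (hF : F ≠ 0)
    (u₀ ux uy h₀ : ℝ → ℝ)
    (hu₀ : Differentiable ℝ u₀) (hux : Differentiable ℝ ux)
    (huy : Differentiable ℝ uy) (hh₀ : Differentiable ℝ h₀)
    (ode1 : ∀ t, deriv u₀ t = -(u₀ t) * ux t)
    (ode2 : ∀ t, deriv ux t = -(ux t) ^ 2 + fbar * uy t - fbar ^ 2)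
    (ode3 : ∀ t, deriv uy t = -(uy t) * ux t)
    (ode4 : ∀ t, deriv h₀ t = -(h₀ t) * ux t)
    (u v h : ℝ → ℝ → ℝ → ℝ)
    (hu : ∀ x y t, u x y t = u₀ t + ux t * x + uy t * y)
    (hv : ∀ x y t, v x y t = -(fbar * x))
    (hh : ∀ x y t, h x y t = h₀ t) :
    (∀ x y t, deriv (fun s => u x y s) t =
      -(u x y t) * deriv (fun a => u a y t) x - v x y t * deriv (fun b => u x b t) y
        - (1 / F ^ 2) * deriv (fun a => h a y t) x + fbar * v x y t) ∧
    (∀ x y t, deriv (fun s => v x y s) t =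
      -(u x y t) * deriv (fun a => v a y t) x - v x y t * deriv (fun b => v x b t) y
        - (1 / F ^ 2) * deriv (fun b => h x b t) y - fbar * u x y t) ∧
    (∀ x y t, deriv (fun s => h x y s) t =
      -(deriv (fun a => u a y t * h a y t) x) - deriv (fun b => v x b t * h x b t) y) :=
  stmt_8_general fbar F u₀ ux uy h₀ hu₀ hux huy ode1 ode2 ode3 ode4 u v h hu hv hh
end

section
/- On the interval [0, π/(2f̄)), the functions ṽ₀(t) = 0, ṽ_x(t) = 0, ṽ_y(t) = -f̄ tan(f̄ t), h̃₀(t) = h₀ sec(f̄ t) are the solutions of the ODE system dṽ₀/dt = -ṽ₀ ṽ_y, dṽ_x/dt = -ṽ_x ṽ_y, dṽ_y/dt = -f̄ ṽ_x - ṽ_y² - f̄², dh̃₀/dt = -h̃₀ ṽ_y with initial data ṽ₀(0) = ṽ_x(0) = ṽ_y(0) = 0 and h̃₀(0) = h₀; in particular ṽ_y(t) → -∞ as t → π/(2f̄)⁻. -/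
/-! Since `tan' = 1 + tan²`, `v = -f̄ tan (f̄ t)` solves the Riccati equation `v' = -v² - f̄²`,
and `sec' = sec · tan` gives `h' = -h v` for `h = h₀ sec (f̄ t)`; both are differentiable while
`f̄ t < π / 2`, and `v` blows up with `tan` at `π / 2`. -/

open Real Filter Set Topology

section TanOfLinear

variable {a t : ℝ}

lemma cos_mul_ne_zero_of_mem_Ico (ha : 0 < a) (ht : t ∈ Ico 0 (π / (2 * a))) :
    cos (a * t) ≠ 0 := by
  have hlt : a * t < π / 2 := by
    linarith [(lt_div_iff₀ (by positivity)).mp ht.2]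
  have hnonneg : 0 ≤ a * t := mul_nonneg ha.le ht.1
  exact (cos_pos_of_mem_Ioo ⟨by linarith [pi_pos], hlt⟩).ne'

lemma hasDerivAt_neg_mul_tan_mul (hcos : cos (a * t) ≠ 0) :
    HasDerivAt (fun s => -a * tan (a * s)) (-(-a * tan (a * t)) ^ 2 - a ^ 2) t := by
  refine (((hasDerivAt_tan hcos).comp t (hasDerivAt_const_mul a)).const_mul (-a)).congr_deriv ?_
  rw [one_div, ← inv_one_add_tan_sq hcos, inv_inv]
  ring

lemma hasDerivAt_const_mul_sec_mul (c : ℝ) (hcos : cos (a * t) ≠ 0) :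
    HasDerivAt (fun s => c * (1 / cos (a * s)))
      (c * (1 / cos (a * t)) * (a * tan (a * t))) t := by
  simp only [one_div]
  refine ((((hasDerivAt_cos (a * t)).comp t (hasDerivAt_const_mul a)).inv hcos).const_mul c
    ).congr_deriv ?_
  simp only [Function.comp_apply, tan_eq_sin_div_cos]
  field_simp

lemma tendsto_mul_nhdsLT_div (ha : 0 < a) (b : ℝ) :
    Tendsto (fun s => a * s) (𝓝[<] (b / a)) (𝓝[<] b) := by
  have hb : a * (b / a) = b := by field_simp
  apply tendsto_nhdsWithin_of_tendsto_nhds_of_eventually_within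
  · simpa only [hb] using ((continuous_const_mul a).tendsto (b / a)).mono_left nhdsWithin_le_nhds
  · filter_upwards [self_mem_nhdsWithin] with s hs
    exact (lt_div_iff₀' ha).mp hs

lemma tendsto_neg_mul_tan_mul_atBot (ha : 0 < a) :
    Tendsto (fun s => -a * tan (a * s)) (𝓝[<] (π / (2 * a))) atBot := by
  have hpt : π / (2 * a) = π / 2 / a := by ring
  rw [hpt]
  exact (tendsto_tan_pi_div_two.comp (tendsto_mul_nhdsLT_div ha _)).const_mul_atTop_of_neg
    (neg_neg_of_pos ha)

end TanOfLinear

/-- The explicit functions solve the reduced ODE system for Condition IV on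
[0, π/(2f̄)) with the stated initial data, and ṽ_y blows up to -∞ as t → π/(2f̄)⁻. -/
theorem stmt_9 (fbar h₀ : ℝ) (hf : 0 < fbar)
    (v₀ vx vy hh₀ : ℝ → ℝ)
    (hv₀ : ∀ t, v₀ t = 0) (hvx : ∀ t, vx t = 0)
    (hvy : ∀ t, vy t = -fbar * Real.tan (fbar * t))
    (hhh₀ : ∀ t, hh₀ t = h₀ * (1 / Real.cos (fbar * t))) :
    (∀ t ∈ Set.Ico (0 : ℝ) (Real.pi / (2 * fbar)),
      deriv v₀ t = -(v₀ t) * vy t ∧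
      deriv vx t = -(vx t) * vy t ∧
      deriv vy t = -fbar * vx t - (vy t) ^ 2 - fbar ^ 2 ∧
      deriv hh₀ t = -(hh₀ t) * vy t) ∧
    (v₀ 0 = 0 ∧ vx 0 = 0 ∧ vy 0 = 0 ∧ hh₀ 0 = h₀) ∧
    Filter.Tendsto vy (nhdsWithin (Real.pi / (2 * fbar)) (Set.Iio (Real.pi / (2 * fbar))))
      Filter.atBot := by
  obtain rfl : v₀ = 0 := funext hv₀
  obtain rfl : vx = 0 := funext hvx
  obtain rfl : vy = fun t => -fbar * tan (fbar * t) := funext hvy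
  obtain rfl : hh₀ = fun t => h₀ * (1 / cos (fbar * t)) := funext hhh₀
  refine ⟨fun t ht => ?_, by simp, tendsto_neg_mul_tan_mul_atBot hf⟩
  have hcos := cos_mul_ne_zero_of_mem_Ico hf ht
  refine ⟨by simp, by simp, ?_, ?_⟩
  · simpa using (hasDerivAt_neg_mul_tan_mul hcos).deriv
  · rw [(hasDerivAt_const_mul_sec_mul h₀ hcos).deriv]
    ring
end
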